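/- The quotient map SL(2,ℤ) → PSL(2,ℤ) restricts to an injective homomorphism on the commutator subgroup of SL(2,ℤ). -/

import Mathlib

abbrev SL2Z := Matrix.SpecialLinearGroup (Fin 2) ℤ

instance : Fact (Even (Fintype.card (Fin 2))) := ⟨by decide⟩

/-- The subgroup `{±I}` of `SL(2,ℤ)`. -/
def pmI : Subgroup SL2Z := Subgroup.zpowers (-1 : SL2Z)

instance : pmI.Normal := by
  constructor
  intro x hx g
  obtain ⟨k, rfl⟩ := hx
  have hc : ∀ h : SL2Z, (-1 : SL2Z) ^ k * h = h * (-1 : SL2Z) ^ k := fun h =>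
    ((Commute.neg_one_left h).zpow_left k).eq
  rw [← hc g, mul_assoc, mul_inv_cancel, mul_one]
  exact ⟨k, rfl⟩

/-- `PSL(2,ℤ) = SL(2,ℤ)/{±I}`. -/
abbrev PSL2Z := SL2Z ⧸ pmI

/-!
Since `pmI = {1, -1}`, injectivity amounts to `-1` not lying in the commutator subgroup. This is
detected modulo 4: twelve explicit matrices form a subgroup of `SL(2, ℤ/4)` containing every
commutator but not `-1`, a finite check. (The abelianization of `SL(2, ℤ)` is `ℤ/12`, with `-1`
mapping to `6`, and only its `ℤ/4` component sees `-1`.)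
-/

open Subgroup

section General

variable {G G' : Type*} [Group G] [Group G']

lemma QuotientGroup.mk'_domRestrict_injective {N H : Subgroup G} [N.Normal] (h : Disjoint N H) :
    Function.Injective ((QuotientGroup.mk' N).domRestrict H) := by
  rw [← MonoidHom.ker_eq_bot_iff, MonoidHom.ker_domRestrict, QuotientGroup.ker_mk',
    subgroupOf_eq_bot]
  exact h

lemma Subgroup.disjoint_zpowers_of_sq_eq_one {a : G} {H : Subgroup G} (ha : a ^ 2 = 1)
    (haH : a ∉ H) : Disjoint (zpowers a) H := by
  rw [disjoint_def]
  rintro _ ⟨k, rfl⟩ hk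
  obtain ⟨j, rfl | rfl⟩ := Int.even_or_odd' k
  · simp [zpow_mul, zpow_ofNat, ha]
  · exact absurd (by simpa [zpow_add, zpow_mul, zpow_ofNat, ha] using hk) haH

lemma notMem_commutator_of_map_notMem (f : G →* G') {g : G} (hg : f g ∉ commutator G') :
    g ∉ commutator G := fun h =>
  hg <| (map_commutator_eq (f := f)).le.trans (commutator_mono le_top le_top) (mem_map_of_mem f h)

end General

open Matrix

/-- The commutator subgroup of `SL(2, ℤ/4)`, which has index 4. -/
def commutatorSL2ZMod4Carrier : Finset (Matrix (Fin 2) (Fin 2) (ZMod 4)) :=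
  {!![1, 0; 0, 1], !![1, 2; 2, 1], !![3, 0; 2, 3], !![3, 2; 0, 3], !![0, 1; 3, 3], !![0, 3; 1, 3],
   !![1, 1; 1, 2], !![1, 3; 3, 2], !![2, 1; 1, 1], !![2, 3; 3, 1], !![3, 1; 3, 0], !![3, 3; 1, 0]}

lemma mul_mem_commutatorSL2ZMod4Carrier : ∀ A ∈ commutatorSL2ZMod4Carrier,
    ∀ B ∈ commutatorSL2ZMod4Carrier, A * B ∈ commutatorSL2ZMod4Carrier := by
  decide +kernel

def commutatorSL2ZMod4 : Subgroup (SpecialLinearGroup (Fin 2) (ZMod 4)) where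
  carrier := {g | (g : Matrix (Fin 2) (Fin 2) (ZMod 4)) ∈ commutatorSL2ZMod4Carrier}
  one_mem' := by decide
  mul_mem' hg hh := mul_mem_commutatorSL2ZMod4Carrier _ hg _ hh
  inv_mem' {g} := by
    revert g
    decide +kernel

instance : DecidablePred (· ∈ commutatorSL2ZMod4) := fun g =>
  inferInstanceAs (Decidable ((g : Matrix (Fin 2) (Fin 2) (ZMod 4)) ∈ commutatorSL2ZMod4Carrier))

open scoped commutatorElement in
lemma commutatorElement_mem_commutatorSL2ZMod4 :
    ∀ g h : SpecialLinearGroup (Fin 2) (ZMod 4), ⁅g, h⁆ ∈ commutatorSL2ZMod4 := by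
  decide +kernel

lemma commutator_le_commutatorSL2ZMod4 :
    commutator (SpecialLinearGroup (Fin 2) (ZMod 4)) ≤ commutatorSL2ZMod4 := by
  rw [commutator_def, commutator_le]
  exact fun g _ h _ => commutatorElement_mem_commutatorSL2ZMod4 g h

lemma neg_one_notMem_commutator_SL2_ZMod4 :
    (-1 : SpecialLinearGroup (Fin 2) (ZMod 4)) ∉ commutator _ := fun h =>
  absurd (commutator_le_commutatorSL2ZMod4 h) (by decide)

lemma neg_one_notMem_commutator_SL2Z : (-1 : SL2Z) ∉ commutator SL2Z :=
  notMem_commutator_of_map_notMem (SpecialLinearGroup.map (Int.castRingHom (ZMod 4))) <| by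
    simpa using neg_one_notMem_commutator_SL2_ZMod4

theorem stmt13 :
    Function.Injective
      (fun g : commutator SL2Z => QuotientGroup.mk' pmI (g : SL2Z)) :=
  QuotientGroup.mk'_domRestrict_injective <|
    disjoint_zpowers_of_sq_eq_one (by simp [sq]) neg_one_notMem_commutator_SL2Z
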